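/- Let ν be a Borel probability measure on [0,1] and let (X_i)_{i≥1} be i.i.d. random variables with law ν; write X̄_m = (X₁+⋯+X_m)/m. Then the sequence m ↦ E[X̄_m/(1−X̄_m)] (with values in [0,∞]) is nonincreasing in m, i.e. for all integers 1 ≤ j ≤ i one has E[X̄_i/(1−X̄_i)] ≤ E[X̄_j/(1−X̄_j)]. -/

import Mathlib

/-!
Write `odds x = x / (1 - x)`, a convex function on `[0, 1]` with `odds 1 = ∞`. For `1 ≤ j ≤ i`, the
mean `X̄_i` of `X₀, …, X_{i-1}` is the average, over all `j`-element subsets `S ⊆ {0, …, i-1}`, of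
the means `X̄_S`, so Jensen's inequality gives `odds X̄_i ≤ avg_S odds X̄_S` pointwise. By
independence and identical distribution every `X̄_S` has the law of `X̄_j`; integrating the
pointwise bound yields `E[odds X̄_i] ≤ E[odds X̄_j]`.
-/

open MeasureTheory ProbabilityTheory Filter
open scoped ENNReal

/-- The "condensation integral" `E[X̄_m / (1 - X̄_m)]`, computed in `[0,∞]`
(with the convention `x/(1-x) = ∞` when `x = 1`, realised via `ℝ≥0∞` division),
where `X̄_m = (X₁ + ⋯ + X_m)/m`. -/
noncomputable def meanRatioInt {Ω : Type*} [MeasurableSpace Ω] (μ : Measure Ω)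
    (X : ℕ → Ω → ℝ) (m : ℕ) : ℝ≥0∞ :=
  ∫⁻ ω, ENNReal.ofReal ((∑ i ∈ Finset.range m, X i ω) / m) /
    ENNReal.ofReal (1 - (∑ i ∈ Finset.range m, X i ω) / m) ∂μ

open Finset

noncomputable def odds (x : ℝ) : ℝ≥0∞ := ENNReal.ofReal x / ENNReal.ofReal (1 - x)

lemma measurable_odds : Measurable odds := by
  unfold odds; fun_prop

lemma odds_one : odds 1 = ∞ := by simp [odds]

lemma odds_of_lt_one {x : ℝ} (hx : x < 1) : odds x = ENNReal.ofReal (x / (1 - x)) :=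
  (ENNReal.ofReal_div_of_pos (sub_pos.2 hx)).symm

lemma convexOn_div_one_sub : ConvexOn ℝ (Set.Iio 1) fun x : ℝ => x / (1 - x) := by
  let g : ℝ →ᵃ[ℝ] ℝ := AffineMap.lineMap 1 0
  have h := ((convexOn_zpow (-1 : ℤ)).comp_affineMap g).add_const (-1)
  have hpre : g ⁻¹' Set.Ioi 0 = Set.Iio 1 := by
    ext x; simp [g, AffineMap.lineMap_apply]
  rw [hpre] at h
  refine h.congr fun x hx => ?_
  have hx' : 1 - x ≠ 0 := (sub_pos.2 hx).ne'
  have hgx : g x = 1 - x := by simp [g, AffineMap.lineMap_apply_ring']; ring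
  simp only [Pi.add_apply, Function.comp_apply, hgx, zpow_neg_one]
  field_simp
  ring

lemma odds_sum_div_card_le {ι : Type*} {t : Finset ι} (ht : t.Nonempty) {y : ι → ℝ}
    (hy : ∀ a ∈ t, y a ∈ Set.Icc 0 1) :
    odds ((∑ a ∈ t, y a) / #t) ≤ (∑ a ∈ t, odds (y a)) / #t := by
  by_cases hone : ∃ a ∈ t, y a = 1
  · obtain ⟨a, ha, hya⟩ := hone
    have : ∑ a ∈ t, odds (y a) = ∞ := ENNReal.sum_eq_top.2 ⟨a, ha, by rw [hya, odds_one]⟩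
    simp [this, ENNReal.top_div_of_ne_top]
  push Not at hone
  have hlt : ∀ a ∈ t, y a < 1 := fun a ha => (hy a ha).2.lt_of_ne (hone a ha)
  have hcard : (0 : ℝ) < #t := by exact_mod_cast ht.card_pos
  have havg : (∑ a ∈ t, y a) / #t < 1 := by
    rw [div_lt_one hcard]
    simpa using sum_lt_sum_of_nonempty ht hlt
  have hjensen : ((∑ a ∈ t, y a) / #t) / (1 - (∑ a ∈ t, y a) / #t)
      ≤ (∑ a ∈ t, y a / (1 - y a)) / #t := by
    have := convexOn_div_one_sub.map_sum_le (t := t) (w := fun _ => (#t : ℝ)⁻¹) (p := y)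
      (fun _ _ => by positivity) (by simp [hcard.ne']) hlt
    simpa [smul_eq_mul, ← Finset.mul_sum, div_eq_inv_mul] using this
  rw [odds_of_lt_one havg, sum_congr rfl fun a ha => odds_of_lt_one (hlt a ha),
    ← ENNReal.ofReal_sum_of_nonneg fun a ha => div_nonneg (hy a ha).1 (sub_pos.2 (hlt a ha)).le,
    ← ENNReal.ofReal_natCast, ← ENNReal.ofReal_div_of_pos hcard]
  exact ENNReal.ofReal_le_ofReal hjensen

lemma Finset.sum_powersetCard_sum {ι M : Type*} [DecidableEq ι] [AddCommMonoid M] (s : Finset ι)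
    {j : ℕ} (hj : 1 ≤ j) (f : ι → M) :
    ∑ S ∈ s.powersetCard j, ∑ a ∈ S, f a = (#s - 1).choose (j - 1) • ∑ a ∈ s, f a := by
  calc ∑ S ∈ s.powersetCard j, ∑ a ∈ S, f a
      = ∑ a ∈ s, ∑ _S ∈ (s.powersetCard j).filter ({a} ⊆ ·), f a :=
        sum_comm' fun S a => by
          simp only [mem_filter, mem_powersetCard, singleton_subset_iff]
          constructor
          · rintro ⟨⟨hS, hcard⟩, ha⟩; exact ⟨⟨⟨hS, hcard⟩, ha⟩, hS ha⟩
          · rintro ⟨⟨⟨hS, hcard⟩, ha⟩, -⟩; exact ⟨⟨hS, hcard⟩, ha⟩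
    _ = ∑ a ∈ s, (#s - 1).choose (j - 1) • f a := sum_congr rfl fun a ha => by
        rw [sum_const, card_filter_powersetCard_subset _ _ _ (singleton_subset_iff.2 ha)
          (by simpa using hj), card_singleton]
    _ = (#s - 1).choose (j - 1) • ∑ a ∈ s, f a := (smul_sum ..).symm

lemma Finset.sum_powersetCard_sum_div_choose {ι K : Type*} [DecidableEq ι] [Field K] [CharZero K]
    (s : Finset ι) {j : ℕ} (hj : 1 ≤ j) (hjs : j ≤ #s) (f : ι → K) :
    (∑ S ∈ s.powersetCard j, (∑ a ∈ S, f a) / j) / (#s).choose j = (∑ a ∈ s, f a) / #s := by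
  obtain ⟨n, hn⟩ : ∃ n, #s = n + 1 := ⟨#s - 1, by omega⟩
  obtain ⟨k, rfl⟩ : ∃ k, j = k + 1 := ⟨j - 1, by omega⟩
  have hchoose : ((n + 1 : ℕ) : K) * n.choose k = (n + 1).choose (k + 1) * (k + 1 : ℕ) := by
    exact_mod_cast Nat.add_one_mul_choose_eq n k
  have hpos : ((n + 1).choose (k + 1) : K) ≠ 0 := by
    exact_mod_cast (Nat.choose_pos (by omega)).ne'
  rw [← sum_div, sum_powersetCard_sum s hj, nsmul_eq_mul, hn]
  simp only [Nat.add_sub_cancel]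
  field_simp
  push_cast at hchoose ⊢
  linear_combination (∑ a ∈ s, f a) * hchoose

lemma odds_sum_div_card_le_sum_powersetCard {ι : Type*} [DecidableEq ι] {s : Finset ι} {j : ℕ}
    (hj : 1 ≤ j) (hjs : j ≤ #s) {y : ι → ℝ} (hy : ∀ a ∈ s, y a ∈ Set.Icc 0 1) :
    odds ((∑ a ∈ s, y a) / #s)
      ≤ (∑ S ∈ s.powersetCard j, odds ((∑ a ∈ S, y a) / j)) / (#s).choose j := by
  have hmean_mem : ∀ S ∈ s.powersetCard j, (∑ a ∈ S, y a) / j ∈ Set.Icc (0 : ℝ) 1 := by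
    intro S hS
    obtain ⟨hSs, rfl⟩ := mem_powersetCard.1 hS
    have hcard : (0 : ℝ) < #S := by exact_mod_cast (by omega : 0 < #S)
    refine ⟨div_nonneg (sum_nonneg fun a ha => (hy a (hSs ha)).1) hcard.le, ?_⟩
    rw [div_le_one hcard]
    simpa using sum_le_sum fun a ha => (hy a (hSs ha)).2
  have := odds_sum_div_card_le (powersetCard_nonempty.2 hjs) hmean_mem
  rwa [card_powersetCard, sum_powersetCard_sum_div_choose s hj hjs] at this

lemma ProbabilityTheory.iIndepFun.identDistrib_comp_of_injective {Ω ι κ β : Type*}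
    [MeasurableSpace Ω] {μ : Measure Ω} [Fintype κ] [MeasurableSpace β] {X : ι → Ω → β}
    {ν : Measure β} (hX : iIndepFun X μ) (hmeas : ∀ i, AEMeasurable (X i) μ)
    (hlaw : ∀ i, μ.map (X i) = ν) {e e' : κ → ι} (he : e.Injective) (he' : e'.Injective) :
    IdentDistrib (fun ω k => X (e k) ω) (fun ω k => X (e' k) ω) μ μ where
  aemeasurable_fst := aemeasurable_pi_lambda _ fun k => hmeas (e k)
  aemeasurable_snd := aemeasurable_pi_lambda _ fun k => hmeas (e' k)
  map_eq := by
    rw [(hX.precomp he).map_fun_eq_pi_map fun k => hmeas (e k),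
      (hX.precomp he').map_fun_eq_pi_map fun k => hmeas (e' k)]
    congr 1
    funext k
    simp only [hlaw]

lemma ProbabilityTheory.iIndepFun.identDistrib_sum_of_card_eq {Ω ι β : Type*}
    [MeasurableSpace Ω] {μ : Measure Ω} [MeasurableSpace β] [AddCommMonoid β] [MeasurableAdd₂ β]
    {X : ι → Ω → β} {ν : Measure β} (hX : iIndepFun X μ) (hmeas : ∀ i, AEMeasurable (X i) μ)
    (hlaw : ∀ i, μ.map (X i) = ν) {S T : Finset ι} (h : #S = #T) :
    IdentDistrib (fun ω => ∑ a ∈ S, X a ω) (fun ω => ∑ a ∈ T, X a ω) μ μ := by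
  obtain ⟨σ⟩ : Nonempty (S ≃ T) := Fintype.card_eq.1 (by simpa using h)
  have := (hX.identDistrib_comp_of_injective hmeas hlaw Subtype.val_injective
    (Subtype.val_injective.comp σ.injective)).comp
    (u := fun v : S → β => ∑ k, v k) (by fun_prop)
  convert this using 1 <;> funext ω
  · exact (sum_coe_sort S fun a => X a ω).symm
  · exact ((sum_coe_sort T fun a => X a ω).symm.trans (σ.sum_comp fun a => X a ω).symm)

theorem meanRatioInt_antitone_general
    {Ω : Type*} [MeasurableSpace Ω] (μ : Measure Ω)
    (ν : Measure ℝ)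
    (X : ℕ → Ω → ℝ) (hmeas : ∀ i, Measurable (X i))
    (hindep : iIndepFun X μ)
    (hlaw : ∀ i, μ.map (X i) = ν)
    (hsupp : ν (Set.Icc (0:ℝ) 1)ᶜ = 0) :
    ∀ i j : ℕ, 1 ≤ j → j ≤ i → meanRatioInt μ X i ≤ meanRatioInt μ X j := by
  intro i j hj hij
  have hunit : ∀ᵐ ω ∂μ, ∀ a, X a ω ∈ Set.Icc (0 : ℝ) 1 := ae_all_iff.2 fun a =>
    ae_of_ae_map (hmeas a).aemeasurable (by rw [hlaw a]; exact mem_ae_iff.2 hsupp)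
  have hlaw_subset : ∀ S ∈ (range i).powersetCard j,
      ∫⁻ ω, odds ((∑ a ∈ S, X a ω) / j) ∂μ = meanRatioInt μ X j := fun S hS =>
    ((hindep.identDistrib_sum_of_card_eq (fun a => (hmeas a).aemeasurable) hlaw
      (T := range j) (by simp [(mem_powersetCard.1 hS).2])).comp
      (measurable_odds.comp (measurable_id.div_const _))).lintegral_eq
  have hmS : ∀ S : Finset ℕ, Measurable fun ω => odds ((∑ a ∈ S, X a ω) / j) := fun S =>
    measurable_odds.comp ((Finset.measurable_sum S fun a _ => hmeas a).div_const _)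
  calc meanRatioInt μ X i = ∫⁻ ω, odds ((∑ a ∈ range i, X a ω) / i) ∂μ := rfl
    _ ≤ ∫⁻ ω, (∑ S ∈ (range i).powersetCard j, odds ((∑ a ∈ S, X a ω) / j)) / i.choose j ∂μ :=
        lintegral_mono_ae <| hunit.mono fun ω hω => by
          simpa using odds_sum_div_card_le_sum_powersetCard hj (by simpa using hij)
            (s := range i) fun a _ => hω a
    _ = (∑ S ∈ (range i).powersetCard j, ∫⁻ ω, odds ((∑ a ∈ S, X a ω) / j) ∂μ) / i.choose j := by
        simp only [div_eq_mul_inv _ ((i.choose j : ℕ) : ℝ≥0∞)]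
        rw [lintegral_mul_const _ (Finset.measurable_sum _ fun S _ => hmS S),
          lintegral_finsetSum _ fun S _ => hmS S]
    _ = meanRatioInt μ X j := by
        have hchoose : (i.choose j : ℝ≥0∞) ≠ 0 := by exact_mod_cast (Nat.choose_pos hij).ne'
        rw [sum_congr rfl hlaw_subset, sum_const, card_powersetCard, card_range, nsmul_eq_mul,
          mul_comm, ENNReal.mul_div_cancel_right hchoose (by simp)]

/-- The sequence `m ↦ E[X̄_m/(1-X̄_m)]` (with values in `[0,∞]`) is nonincreasing:
for all integers `1 ≤ j ≤ i`, `E[X̄_i/(1-X̄_i)] ≤ E[X̄_j/(1-X̄_j)]`. -/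
theorem meanRatioInt_antitone
    {Ω : Type*} [MeasurableSpace Ω] (μ : Measure Ω) [IsProbabilityMeasure μ]
    (ν : Measure ℝ) [IsProbabilityMeasure ν]
    (X : ℕ → Ω → ℝ) (hmeas : ∀ i, Measurable (X i))
    (hindep : iIndepFun X μ)
    (hlaw : ∀ i, μ.map (X i) = ν)
    (hsupp : ν (Set.Icc (0:ℝ) 1)ᶜ = 0) :
    ∀ i j : ℕ, 1 ≤ j → j ≤ i → meanRatioInt μ X i ≤ meanRatioInt μ X j :=
  meanRatioInt_antitone_general μ ν X hmeas hindep hlaw hsupp
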